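/- Let X ⊆ A^G be a topologically weakly mixing subshift. If the smallest equivalence relation generated by the closure of the asymptotic relation equals X² (i.e., X has asymptotic class at most 2), then X has bounded chain exchangeability. -/

import Mathlib

/-- The left shift action on `A^G`: `(σ^g x)_h = x_{g⁻¹ h}`. -/
def shift {G A : Type*} [Group G] (g : G) (x : G → A) : G → A :=
  fun h => x (g⁻¹ * h)

/-- Patterns `p, q` over support `F` are exchangeable in `X`: there is an asymptotic pair
`(x,y) ∈ X²` with `x|_F = p` and `y|_F = q`. -/
def Exchangeable {G A : Type*} [Group G] (X : Set (G → A)) (F : Set G) (p q : G → A) : Prop :=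
  ∃ x ∈ X, ∃ y ∈ X, {g : G | x g ≠ y g}.Finite ∧
    (∀ h ∈ F, x h = p h) ∧ (∀ h ∈ F, y h = q h)

/-- `X` has bounded chain exchangeability with constant `N`. -/
def BCE {G A : Type*} [Group G] (X : Set (G → A)) (N : ℕ) : Prop :=
  ∀ F : Set G, F.Finite → ∀ a ∈ X, ∀ b ∈ X,
    ∃ r : Fin (N + 1) → G → A,
      (∀ i, ∃ x ∈ X, ∀ h ∈ F, x h = r i h) ∧
      (∀ h ∈ F, r 0 h = a h) ∧ (∀ h ∈ F, r (Fin.last N) h = b h) ∧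
      ∀ i : Fin N, Exchangeable X F (r i.castSucc) (r i.succ)


/-!
Let `S` be the closure of the asymptotic relation and `R n ⊆ X²` the pairs joined by an
`S`-chain of length `n`. By compactness each `R n` is closed, and asymptotic class at most 2 says
that the `R n` cover `X²`, so by Baire one `R N` has nonempty interior in `X²`. As `R N` is
shift-invariant and closed, weak mixing spreads this interior over all of `X²`: every pair of
points of `X` is joined by an `S`-chain of length `N`. Since each step of such a chain is a limit
of asymptotic pairs, on a finite window `F` it is an exchangeable pair of patterns.
-/

open Set Topology Relation

section Chains

variable {α : Type*} {S : Set (α × α)} {n : ℕ}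

def chainRel (S : Set (α × α)) (n : ℕ) : Set (α × α) :=
  {p | ∃ z : Fin (n + 1) → α, z 0 = p.1 ∧ z (Fin.last n) = p.2 ∧
    ∀ i : Fin n, (z i.castSucc, z i.succ) ∈ S}

lemma mem_chainRel_zero (x : α) : (x, x) ∈ chainRel S 0 :=
  ⟨fun _ => x, rfl, rfl, fun i => i.elim0⟩

lemma mem_chainRel_succ {x y w : α} (hxy : (x, y) ∈ chainRel S n) (hyw : (y, w) ∈ S) :
    (x, w) ∈ chainRel S (n + 1) := by
  obtain ⟨z, hz0, hzn, hz⟩ := hxy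
  refine ⟨Fin.snoc z w, ?_, Fin.snoc_last _ _, Fin.lastCases ?_ fun i => ?_⟩
  · rw [← Fin.castSucc_zero, Fin.snoc_castSucc, hz0]
  · rw [Fin.succ_last, Fin.snoc_last, Fin.snoc_castSucc, hzn]
    exact hyw
  · rw [Fin.succ_castSucc, Fin.snoc_castSucc, Fin.snoc_castSucc]
    exact hz i

lemma exists_mem_chainRel_of_reflTransGen {x y : α}
    (h : ReflTransGen (fun a b => (a, b) ∈ S) x y) : ∃ n, (x, y) ∈ chainRel S n := by
  induction h with
  | refl => exact ⟨0, mem_chainRel_zero x⟩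
  | tail _ hyw ih =>
    obtain ⟨n, hn⟩ := ih
    exact ⟨n + 1, mem_chainRel_succ hn hyw⟩

lemma exists_mem_chainRel_of_eqvGen (hS : ∀ {a b}, (a, b) ∈ S → (b, a) ∈ S) {x y : α}
    (h : EqvGen (fun a b => (a, b) ∈ S) x y) : ∃ n, (x, y) ∈ chainRel S n := by
  have : Std.Symm (fun a b => (a, b) ∈ S) := ⟨fun _ _ => hS⟩
  rw [EqvGen.eqvGen_eq_reflTransGen] at h
  exact exists_mem_chainRel_of_reflTransGen h

lemma mapsTo_chainRel {f : α → α} (hf : MapsTo (Prod.map f f) S S) (n : ℕ) :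
    MapsTo (Prod.map f f) (chainRel S n) (chainRel S n) := by
  rintro p ⟨z, hz0, hzn, hz⟩
  exact ⟨f ∘ z, by simp [hz0], by simp [hzn], fun i => hf (hz i)⟩

lemma chain_mem_of_subset_prod {X : Set α} (hS : S ⊆ X ×ˢ X) {z : Fin (n + 1) → α}
    (hz : ∀ i : Fin n, (z i.castSucc, z i.succ) ∈ S) (h0 : z 0 ∈ X) (i : Fin (n + 1)) :
    z i ∈ X :=
  Fin.cases h0 (fun i => (hS (hz i)).2) i

lemma isClosed_chainRel [TopologicalSpace α] [CompactSpace α] [T2Space α] (hS : IsClosed S)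
    (n : ℕ) : IsClosed (chainRel S n) := by
  set C := {z : Fin (n + 1) → α | ∀ i : Fin n, (z i.castSucc, z i.succ) ∈ S}
  have hC : IsClosed C := by
    simp only [C, ofPred_forall]
    exact isClosed_iInter fun i => hS.preimage (by fun_prop)
  have hchain : chainRel S n = (fun z => (z 0, z (Fin.last n))) '' C := by
    ext ⟨x, y⟩
    simp only [chainRel, C, mem_ofPred_eq, mem_image, Prod.mk.injEq]
    exact ⟨fun ⟨z, h0, hn, hz⟩ => ⟨z, hz, h0, hn⟩, fun ⟨z, hz, h0, hn⟩ => ⟨z, h0, hn, hz⟩⟩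
  rw [hchain]
  exact (hC.isCompact.image (by fun_prop)).isClosed

end Chains

section Topology

variable {β : Type*} [TopologicalSpace β]

lemma IsCompact.exists_isOpen_inter_subset_of_subset_iUnion [T2Space β] {ι : Type*}
    [Countable ι] {K : Set β} (hK : IsCompact K) (hne : K.Nonempty) {R : ι → Set β}
    (hR : ∀ i, IsClosed (R i)) (hcover : K ⊆ ⋃ i, R i) :
    ∃ i U, IsOpen U ∧ (U ∩ K).Nonempty ∧ U ∩ K ⊆ R i := by
  have := isCompact_iff_compactSpace.mp hK
  have : Nonempty K := hne.to_subtype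
  obtain ⟨i, p, hp⟩ := nonempty_interior_of_iUnion_of_closed
    (f := fun i => ((↑) : K → β) ⁻¹' R i) (fun i => (hR i).preimage continuous_subtype_val)
    (eq_univ_of_forall fun p => by simpa using hcover p.2)
  obtain ⟨U, hU, hUeq⟩ := isOpen_induced_iff.mp (isOpen_interior (s := ((↑) : K → β) ⁻¹' R i))
  refine ⟨i, U, hU, ⟨p, ?_, p.2⟩, fun q ⟨hqU, hqK⟩ => ?_⟩
  · have : p ∈ ((↑) : K → β) ⁻¹' U := hUeq ▸ hp
    exact this
  · have : (⟨q, hqK⟩ : K) ∈ interior (((↑) : K → β) ⁻¹' R i) := hUeq ▸ hqU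
    exact interior_subset (s := ((↑) : K → β) ⁻¹' R i) this

def IsTopologicallyTransitiveOn {ι : Type*} (T : ι → β → β) (K : Set β) : Prop :=
  ∀ U V : Set β, IsOpen U → IsOpen V → (U ∩ K).Nonempty → (V ∩ K).Nonempty →
    ∃ i, (T i '' (U ∩ K) ∩ (V ∩ K)).Nonempty

lemma IsTopologicallyTransitiveOn.subset_of_isOpen_inter_subset {ι : Type*} {T : ι → β → β}
    {K R U : Set β} (hT : IsTopologicallyTransitiveOn T K) (hR : IsClosed R)
    (hRinv : ∀ i, ∀ p ∈ K, T i p ∈ R → p ∈ R) (hU : IsOpen U) (hUK : (U ∩ K).Nonempty)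
    (hUR : U ∩ K ⊆ R) : K ⊆ R := by
  intro p hp
  rw [← hR.closure_eq, mem_closure_iff]
  intro V hV hpV
  obtain ⟨i, _, ⟨q, hqV, rfl⟩, hqU⟩ := hT V U hV hU ⟨p, hpV, hp⟩ hUK
  exact ⟨q, hqV.1, hRinv i q hqV.2 (hUR hqU)⟩

end Topology

section Asymptotic

variable {G A : Type*} {X : Set (G → A)}

def asymptoticPairs (X : Set (G → A)) : Set ((G → A) × (G → A)) :=
  {p | p.1 ∈ X ∧ p.2 ∈ X ∧ {g : G | p.1 g ≠ p.2 g}.Finite}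

lemma mapsTo_swap_asymptoticPairs :
    MapsTo Prod.swap (asymptoticPairs X) (asymptoticPairs X) :=
  fun _ ⟨hx, hy, hfin⟩ => ⟨hy, hx, hfin.subset fun _ hg h => hg h.symm⟩

lemma closure_asymptoticPairs_subset [TopologicalSpace A] (hX : IsClosed X) :
    closure (asymptoticPairs X) ⊆ X ×ˢ X :=
  closure_minimal (fun _ hp => ⟨hp.1, hp.2.1⟩) (hX.prod hX)

lemma shift_inv_shift [Group G] (g : G) (x : G → A) : shift g⁻¹ (shift g x) = x := by
  funext h
  simp [shift, ← mul_assoc]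

lemma continuous_shift [Group G] [TopologicalSpace A] (g : G) :
    Continuous (shift (A := A) g) :=
  continuous_pi fun _ => continuous_apply _

lemma mapsTo_shift_asymptoticPairs [Group G] (hinv : ∀ (g : G) (x : G → A), x ∈ X → shift g x ∈ X)
    (g : G) :
    MapsTo (Prod.map (shift g) (shift g)) (asymptoticPairs X) (asymptoticPairs X) := by
  rintro ⟨x, y⟩ ⟨hx, hy, hfin⟩
  refine ⟨hinv g x hx, hinv g y hy, (hfin.image (g * ·)).subset fun h hh => ?_⟩
  exact ⟨g⁻¹ * h, hh, by group⟩

lemma exchangeable_of_mem_closure_asymptoticPairs [Group G] [TopologicalSpace A]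
    [DiscreteTopology A] {F : Set G} (hF : F.Finite) {p q : G → A}
    (h : (p, q) ∈ closure (asymptoticPairs X)) : Exchangeable X F p q := by
  have hcyl : ∀ a : G → A, IsOpen (F.pi fun h => {a h}) :=
    fun a => isOpen_set_pi hF fun _ _ => isOpen_discrete _
  obtain ⟨⟨x, y⟩, ⟨hxp, hyq⟩, hx, hy, hfin⟩ := mem_closure_iff.mp h _
    ((hcyl p).prod (hcyl q)) ⟨fun _ _ => rfl, fun _ _ => rfl⟩
  exact ⟨x, hx, y, hy, hfin, hxp, hyq⟩

lemma bce_of_subset_chainRel [Group G] [TopologicalSpace A] [DiscreteTopology A] {N : ℕ}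
    (hX : IsClosed X) (h : X ×ˢ X ⊆ chainRel (closure (asymptoticPairs X)) N) : BCE X N := by
  intro F hF a ha b hb
  obtain ⟨z, hz0, hzN, hz⟩ := h (mk_mem_prod ha hb)
  have hzX := chain_mem_of_subset_prod (closure_asymptoticPairs_subset hX) hz (hz0 ▸ ha)
  exact ⟨z, fun i => ⟨z i, hzX i, fun _ _ => rfl⟩, fun _ _ => by rw [hz0],
    fun _ _ => by rw [hzN], fun i => exchangeable_of_mem_closure_asymptoticPairs hF (hz i)⟩

end Asymptotic

theorem weakly_mixing_class_two_implies_bce_general {G A : Type*} [Group G]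
    [Fintype A] [TopologicalSpace A] [DiscreteTopology A]
    (X : Set (G → A)) (hclosed : IsClosed X)
    (hinv : ∀ (g : G) (x : G → A), x ∈ X → shift g x ∈ X)
    -- topological weak mixing: the product system is topologically transitive
    (hwm : ∀ U V : Set ((G → A) × (G → A)), IsOpen U → IsOpen V →
      (U ∩ X ×ˢ X).Nonempty → (V ∩ X ×ˢ X).Nonempty →
      ∃ g : G, ((fun p : (G → A) × (G → A) => (shift g p.1, shift g p.2)) ''
          (U ∩ X ×ˢ X) ∩ (V ∩ X ×ˢ X)).Nonempty)
    -- asymptotic class at most 2: (closure A(X,σ))⁺ = X²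
    (hclass : ∀ x ∈ X, ∀ y ∈ X,
      Relation.EqvGen (fun a b => (a, b) ∈
        closure {p : (G → A) × (G → A) |
          p.1 ∈ X ∧ p.2 ∈ X ∧ {g : G | p.1 g ≠ p.2 g}.Finite}) x y) :
    ∃ N : ℕ, BCE X N := by
  rcases X.eq_empty_or_nonempty with rfl | hne
  · exact ⟨0, fun _ _ _ ha => ha.elim⟩
  set S := closure (asymptoticPairs X)
  have hSsymm : ∀ {a b}, (a, b) ∈ S → (b, a) ∈ S := fun h =>
    mapsTo_swap_asymptoticPairs.closure continuous_swap h
  have hSshift (g : G) : MapsTo (Prod.map (shift g) (shift g)) S S :=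
    (mapsTo_shift_asymptoticPairs hinv g).closure
      ((continuous_shift g).prodMap (continuous_shift g))
  have hcover : X ×ˢ X ⊆ ⋃ n, chainRel S n := fun p hp =>
    mem_iUnion.mpr (exists_mem_chainRel_of_eqvGen hSsymm (hclass _ hp.1 _ hp.2))
  obtain ⟨N, U, hU, hUne, hUR⟩ :=
    (hclosed.prod hclosed).isCompact.exists_isOpen_inter_subset_of_subset_iUnion
      (hne.prod hne) (isClosed_chainRel isClosed_closure) hcover
  have hwm' : IsTopologicallyTransitiveOn
      (fun (g : G) (p : (G → A) × (G → A)) => (shift g p.1, shift g p.2)) (X ×ˢ X) := hwm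
  refine ⟨N, bce_of_subset_chainRel hclosed
    (hwm'.subset_of_isOpen_inter_subset (isClosed_chainRel isClosed_closure N)
      (fun g p _ hp => ?_) hU hUne hUR)⟩
  simpa [shift_inv_shift] using mapsTo_chainRel (hSshift g⁻¹) N hp

theorem weakly_mixing_class_two_implies_bce {G A : Type*} [Group G] [Countable G]
    [Fintype A] [TopologicalSpace A] [DiscreteTopology A]
    (X : Set (G → A)) (hclosed : IsClosed X)
    (hinv : ∀ (g : G) (x : G → A), x ∈ X → shift g x ∈ X)
    -- topological weak mixing: the product system is topologically transitive
    (hwm : ∀ U V : Set ((G → A) × (G → A)), IsOpen U → IsOpen V →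
      (U ∩ X ×ˢ X).Nonempty → (V ∩ X ×ˢ X).Nonempty →
      ∃ g : G, ((fun p : (G → A) × (G → A) => (shift g p.1, shift g p.2)) ''
          (U ∩ X ×ˢ X) ∩ (V ∩ X ×ˢ X)).Nonempty)
    -- asymptotic class at most 2: (closure A(X,σ))⁺ = X²
    (hclass : ∀ x ∈ X, ∀ y ∈ X,
      Relation.EqvGen (fun a b => (a, b) ∈
        closure {p : (G → A) × (G → A) |
          p.1 ∈ X ∧ p.2 ∈ X ∧ {g : G | p.1 g ≠ p.2 g}.Finite}) x y) :
    ∃ N : ℕ, BCE X N :=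
  weakly_mixing_class_two_implies_bce_general X hclosed hinv hwm hclass
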